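/- arXiv:1908.09358 — 3 statements merged into one kernel-verified Lean document; each statement's English description precedes it below -/
import Mathlib

section
/- Let E be an (n−d)-dimensional linear subspace of R^n, let v ∈ E^⊥ be a unit vector, and define f(y) = vol_{n−d}(Q_n ∩ (E + y)) for y ∈ E^⊥. Let D = {y ∈ E^⊥ : f(y) ≥ f((1/2)v)}, and suppose S = τu + L is a supporting hyperplane of D within E^⊥ at the point (1/2)v, where L is a linear subspace of E^⊥, u ∈ E^⊥ is a unit vector orthogonal to L, and τ ≥ 0. Then τ ≤ 1/2, and there exists a constant c(d) > 0 depending only on d such that f((1/2)v) ≥ max( f(τu), c(d)·(vol_n({x ∈ Q_n : ⟨x,u⟩ ≥ τ}))^{1+d/2} ). -/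
open MeasureTheory RealInnerProductSpace

/-- The cube of unit volume (side length one) centered at the origin in `ℝ^n`. -/
def unitCube (n : ℕ) : Set (EuclideanSpace ℝ (Fin n)) :=
  {x | ∀ j, |x j| ≤ 1 / 2}

namespace SuppHyp

variable {n : ℕ}

local notation "ES" n => EuclideanSpace ℝ (Fin n)

lemma abs_coord_le_norm {n : ℕ} (x : ES n) (j : Fin n) : |x j| ≤ ‖x‖ := by
  have h := abs_real_inner_le_norm x (EuclideanSpace.single j (1 : ℝ))
  simpa [EuclideanSpace.inner_single_right, EuclideanSpace.norm_single] using h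

lemma measurable_coord {n : ℕ} (j : Fin n) : Measurable fun x : ES n => x j :=
  (measurable_pi_apply j).comp ((MeasurableEquiv.toLp 2 (Fin n → ℝ)).symm).measurable


lemma measurableSet_unitCube {n : ℕ} : MeasurableSet (unitCube n) := by
  have : unitCube n = ⋂ j, {x : ES n | |x j| ≤ 1 / 2} := by
    ext x; simp [unitCube, Set.mem_iInter]
  rw [this]
  exact MeasurableSet.iInter fun j =>
    measurableSet_le ((measurable_coord j).abs) measurable_const

lemma preimage_unitCube {n : ℕ} :
    ((MeasurableEquiv.toLp 2 (Fin n → ℝ)).symm).symm ⁻¹' (unitCube n)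
      = Set.pi Set.univ (fun _ : Fin n => Set.Icc (-(1/2) : ℝ) (1/2)) := by
  ext y
  simp only [Set.mem_preimage, Set.mem_pi, Set.mem_univ, true_imp_iff, Set.mem_Icc]
  constructor
  · intro h j; have := h j; rw [abs_le] at this; exact this
  · intro h j; rw [abs_le]; exact h j


lemma volume_unitCube {n : ℕ} : volume (unitCube n) = 1 := by
  rw [← ((EuclideanSpace.volume_preserving_symm_measurableEquiv_toLp (Fin n)).symm
      ((MeasurableEquiv.toLp 2 (Fin n → ℝ)).symm)).measure_preimage
    measurableSet_unitCube.nullMeasurableSet, preimage_unitCube, volume_pi_pi]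
  simp [Real.volume_Icc]
  norm_num


abbrev box (n : ℕ) : Set (Fin n → ℝ) := Set.pi Set.univ fun _ => Set.Icc (-(1/2) : ℝ) (1/2)

lemma measurableSet_box : MeasurableSet (box n) :=
  MeasurableSet.univ_pi fun _ => measurableSet_Icc

lemma isCompact_box : IsCompact (box n) := isCompact_univ_pi fun _ => isCompact_Icc

lemma integral_box_mul (j k : Fin n) :
    ∫ y in box n, y j * y k = if j = k then 1/12 else 0 := by
  classical
  set F : Fin n → ℝ → ℝ := fun i t =>
    (Set.Icc (-(1/2) : ℝ) (1/2)).indicator (fun t' => (if i = j then t' else 1) * (if i = k then t' else 1)) t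
    with hF
  have hprod : ∀ y : Fin n → ℝ,
      (box n).indicator (fun y => y j * y k) y = ∏ i, F i (y i) := by
    intro y
    by_cases hy : y ∈ box n
    · rw [Set.indicator_of_mem hy]
      have : ∀ i, F i (y i)
          = (if i = j then y i else 1) * (if i = k then y i else 1) := by
        intro i
        rw [hF]
        exact Set.indicator_of_mem (hy i (Set.mem_univ i)) _
      rw [Finset.prod_congr rfl (fun i _ => this i), Finset.prod_mul_distrib,
        Finset.prod_ite_eq' Finset.univ j (fun i => y i),
        Finset.prod_ite_eq' Finset.univ k (fun i => y i)]
      simp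
    · rw [Set.indicator_of_notMem hy]
      have : ∃ i₀, y i₀ ∉ Set.Icc (-(1/2) : ℝ) (1/2) := by
        by_contra hc
        push_neg at hc
        exact hy fun i _ => hc i
      obtain ⟨i₀, hi₀⟩ := this
      rw [eq_comm]
      apply Finset.prod_eq_zero (Finset.mem_univ i₀)
      rw [hF]
      simp only [Set.indicator_of_notMem hi₀]
  have hI2 : ∫ t in Set.Icc (-(1/2) : ℝ) (1/2), t * t = 1/12 := by
    rw [MeasureTheory.integral_Icc_eq_integral_Ioc,
      ← intervalIntegral.integral_of_le (by norm_num : (-(1/2):ℝ) ≤ 1/2)]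
    simp_rw [← pow_two]
    rw [integral_pow]
    norm_num
  have hI1 : ∫ t in Set.Icc (-(1/2) : ℝ) (1/2), t = 0 := by
    rw [MeasureTheory.integral_Icc_eq_integral_Ioc,
      ← intervalIntegral.integral_of_le (by norm_num : (-(1/2):ℝ) ≤ 1/2)]
    rw [integral_id]
    norm_num
  have hI0 : ∫ _ in Set.Icc (-(1/2) : ℝ) (1/2), (1:ℝ) = 1 := by
    rw [setIntegral_const]
    simp [Real.volume_Icc]
    norm_num
  have hsingle : ∀ i, (∫ t, F i t) =
      if i = j then (if i = k then 1/12 else 0) else (if i = k then 0 else 1) := by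
    intro i
    simp only [hF]
    rw [integral_indicator measurableSet_Icc]
    by_cases hij : i = j <;> by_cases hik : i = k
    · subst hij; subst hik
      simpa using hI2
    · subst hij
      simp only [eq_self_iff_true, if_true, hik, if_false, mul_one]
      exact hI1
    · subst hik
      simp only [eq_self_iff_true, if_true, hij, if_false, one_mul]
      exact hI1
    · simp only [hij, hik, if_false, mul_one]
      exact hI0
  calc ∫ y in box n, y j * y k
      = ∫ y : Fin n → ℝ, (box n).indicator (fun y => y j * y k) y := by
        rw [integral_indicator measurableSet_box]
    _ = ∫ y : Fin n → ℝ, ∏ i, F i (y i) := by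
        congr 1
        exact funext hprod
    _ = ∏ i, ∫ t, F i t := MeasureTheory.integral_fintype_prod_eq_prod F
    _ = if j = k then 1/12 else 0 := by
        rw [Finset.prod_congr rfl (fun i _ => hsingle i)]
        rcases eq_or_ne j k with rfl | hjk
        · have h7 : ∀ i : Fin n,
              (if i = j then (if i = j then (1/12:ℝ) else 0) else (if i = j then 0 else 1))
                = if i = j then 1/12 else 1 := by
            intro i; by_cases h : i = j <;> simp [h]
          rw [Finset.prod_congr rfl fun i _ => h7 i,
            Finset.prod_ite_eq' Finset.univ j fun _ => (1/12 : ℝ)]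
          simp
        · rw [if_neg hjk]
          apply Finset.prod_eq_zero (Finset.mem_univ j)
          simp [hjk]


lemma integral_box_sq (w : Fin n → ℝ) :
    ∫ y in box n, (∑ i, y i * w i) ^ 2 = (∑ i, w i ^ 2) / 12 := by
  have hint : ∀ j k : Fin n, IntegrableOn (fun y : Fin n → ℝ => w j * w k * (y j * y k)) (box n) := by
    intro j k
    have hc : Continuous (fun y : Fin n → ℝ => w j * w k * (y j * y k)) := by continuity
    exact hc.continuousOn.integrableOn_compact isCompact_box
  have hexp : ∀ y : Fin n → ℝ,
      (∑ i, y i * w i) ^ 2 = ∑ j, ∑ k, w j * w k * (y j * y k) := by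
    intro y
    rw [pow_two, Finset.sum_mul_sum]
    congr 1; funext j; congr 1; funext k; ring
  calc ∫ y in box n, (∑ i, y i * w i) ^ 2
      = ∫ y in box n, ∑ j, ∑ k, w j * w k * (y j * y k) := by
        congr 1; funext y; exact hexp y
    _ = ∑ j, ∑ k, ∫ y in box n, w j * w k * (y j * y k) := by
        rw [integral_finset_sum]
        · congr 1; funext j
          rw [integral_finset_sum]
          intro k _
          exact hint j k
        · intro j _
          apply integrable_finset_sum
          intro k _
          exact hint j k
    _ = ∑ j, ∑ k, w j * w k * (if j = k then 1/12 else 0) := by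
        congr 1; funext j; congr 1; funext k
        rw [MeasureTheory.integral_const_mul, integral_box_mul]
    _ = ∑ j, w j ^ 2 * (1/12) := by
        apply Finset.sum_congr rfl
        intro j _
        rw [Finset.sum_congr rfl (fun k (_ : k ∈ Finset.univ) =>
            show w j * w k * (if j = k then 1/12 else 0)
              = if j = k then w j * w k * (1/12) else 0 from by
            by_cases h : j = k <;> simp [h]),
          Finset.sum_ite_eq Finset.univ j (fun k => w j * w k * (1/12))]
        simp [pow_two]
    _ = (∑ i, w i ^ 2) / 12 := by
        rw [← Finset.sum_mul]
        ring


lemma cheb (w : ES n) (hw : ‖w‖ = 1) (a : ℝ) (ha : 0 < a) :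
    volume {x | x ∈ unitCube n ∧ a ≤ |⟪x, w⟫|} ≤ ENNReal.ofReal (1 / (12 * a ^ 2)) := by
  classical
  set g : (Fin n → ℝ) → ℝ := fun y => ∑ i, y i * w i with hg
  have hgcont : Continuous g := by
    rw [hg]; continuity
  have hScont : Continuous fun x : ES n => ⟪x, w⟫ := continuous_id.inner continuous_const
  have hSm : MeasurableSet {x : ES n | x ∈ unitCube n ∧ a ≤ |⟪x, w⟫|} := by
    have : {x : ES n | x ∈ unitCube n ∧ a ≤ |⟪x, w⟫|}
        = unitCube n ∩ {x : ES n | a ≤ |⟪x, w⟫|} := rfl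
    rw [this]
    exact measurableSet_unitCube.inter
      (measurableSet_le measurable_const (hScont.abs.measurable))
  have hinner : ∀ y : Fin n → ℝ,
      ⟪((MeasurableEquiv.toLp 2 (Fin n → ℝ)).symm).symm y, w⟫ = g y := by
    intro y
    rw [hg]
    simp only [PiLp.inner_apply, RCLike.inner_apply, conj_trivial]
    exact Finset.sum_congr rfl fun i _ => mul_comm _ _
  have hpre : ((MeasurableEquiv.toLp 2 (Fin n → ℝ)).symm).symm ⁻¹'
        {x : ES n | x ∈ unitCube n ∧ a ≤ |⟪x, w⟫|}
      = {y : Fin n → ℝ | y ∈ box n ∧ a ≤ |g y|} := by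
    ext y
    simp only [Set.mem_preimage, Set.mem_setOf_eq, hinner y]
    constructor
    · rintro ⟨h1, h2⟩
      refine ⟨fun i _ => ?_, h2⟩
      have := h1 i
      rw [abs_le] at this
      exact this
    · rintro ⟨h1, h2⟩
      refine ⟨fun i => ?_, h2⟩
      rw [abs_le]
      exact h1 i (Set.mem_univ i)
  have htrans : volume {x : ES n | x ∈ unitCube n ∧ a ≤ |⟪x, w⟫|}
      = volume {y : Fin n → ℝ | y ∈ box n ∧ a ≤ |g y|} := by
    rw [← ((EuclideanSpace.volume_preserving_symm_measurableEquiv_toLp (Fin n)).symm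
        ((MeasurableEquiv.toLp 2 (Fin n → ℝ)).symm)).measure_preimage
        hSm.nullMeasurableSet, hpre]
  set F : (Fin n → ℝ) → ENNReal :=
    fun y => (box n).indicator (fun y' => ENNReal.ofReal ((g y') ^ 2)) y with hFdef
  have hFm : Measurable F :=
    (ENNReal.measurable_ofReal.comp (hgcont.pow 2).measurable).indicator measurableSet_box
  have hsub : {y : Fin n → ℝ | y ∈ box n ∧ a ≤ |g y|}
      ⊆ {y | ENNReal.ofReal (a ^ 2) ≤ F y} := by
    rintro y ⟨hyb, hya⟩
    simp only [Set.mem_setOf_eq, hFdef, Set.indicator_of_mem hyb]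
    apply ENNReal.ofReal_le_ofReal
    calc a ^ 2 ≤ |g y| ^ 2 := pow_le_pow_left₀ ha.le hya 2
      _ = (g y) ^ 2 := sq_abs _
  have hsum1 : ∑ i, (w : Fin n → ℝ) i ^ 2 = 1 := by
    have h1 : ⟪w, w⟫ = ∑ i, (w : Fin n → ℝ) i * (w : Fin n → ℝ) i := by
      simp only [PiLp.inner_apply, RCLike.inner_apply, conj_trivial]
    have h2 : ⟪w, w⟫ = 1 := by
      rw [real_inner_self_eq_norm_mul_norm, hw]; norm_num
    rw [h1] at h2
    rw [← h2]
    congr 1; funext i; ring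
  have hInt : IntegrableOn (fun y => (g y) ^ 2) (box n) :=
    (hgcont.pow 2).continuousOn.integrableOn_compact isCompact_box
  have hlint : ∫⁻ y, F y = ENNReal.ofReal (1 / 12) := by
    rw [hFdef]
    rw [lintegral_indicator measurableSet_box]
    rw [← ofReal_integral_eq_lintegral_ofReal hInt (ae_of_all _ fun y => sq_nonneg _)]
    rw [integral_box_sq, hsum1]
  have hε0 : ENNReal.ofReal (a ^ 2) ≠ 0 := by
    simp [ENNReal.ofReal_eq_zero, not_le]
    positivity
  have hcheb := mul_meas_ge_le_lintegral₀ (μ := (volume : Measure (Fin n → ℝ)))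
    hFm.aemeasurable (ENNReal.ofReal (a ^ 2))
  rw [hlint] at hcheb
  have hdiv : volume {y : Fin n → ℝ | ENNReal.ofReal (a ^ 2) ≤ F y}
      ≤ ENNReal.ofReal (1 / 12) / ENNReal.ofReal (a ^ 2) := by
    rw [ENNReal.le_div_iff_mul_le (Or.inl hε0) (Or.inl ENNReal.ofReal_ne_top)]
    rw [mul_comm]
    exact hcheb
  calc volume {x : ES n | x ∈ unitCube n ∧ a ≤ |⟪x, w⟫|}
      = volume {y : Fin n → ℝ | y ∈ box n ∧ a ≤ |g y|} := htrans
    _ ≤ volume {y : Fin n → ℝ | ENNReal.ofReal (a ^ 2) ≤ F y} := measure_mono hsub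
    _ ≤ ENNReal.ofReal (1 / 12) / ENNReal.ofReal (a ^ 2) := hdiv
    _ = ENNReal.ofReal (1 / (12 * a ^ 2)) := by
        rw [← ENNReal.ofReal_div_of_pos (by positivity)]
        congr 1
        field_simp

/-- Part B: value at the foot point is at most the level. -/
lemma partB {n d : ℕ} (hdn : d < n) (E : Submodule ℝ (ES n))
    (f : (ES n) → ENNReal)
    (hf : ∀ y, f y = μH[((n - d : ℕ) : ℝ)] (unitCube n ∩ {x | x - y ∈ E}))
    (u : ES n) (hu1 : ‖u‖ = 1) (τ : ℝ) (hτ0 : 0 ≤ τ) (hτ : τ < 1 / 2)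
    (t : ENNReal) (hbeyond : ∀ s : ℝ, τ < s → f (s • u) ≤ t) :
    f (τ • u) ≤ t := by
  have hmn : 0 < n - d := Nat.sub_pos_of_lt hdn
  have hm0 : (0 : ℝ) ≤ ((n - d : ℕ) : ℝ) := by positivity
  have hmne : ((n - d : ℕ) : ℝ) ≠ 0 := by
    simp only [ne_eq, Nat.cast_eq_zero]; omega
  -- key scaling estimate
  have key : ∀ ρ : NNReal, ρ ≠ 0 → (ρ : ℝ) < 1 →
      (ρ : ENNReal) ^ ((n - d : ℕ) : ℝ) * f (τ • u) ≤ t := by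
    intro ρ hρ0 hρ1
    have hρpos : (0 : ℝ) < ρ := by positivity
    set c : ℝ := (1 - (ρ : ℝ)) / 2 with hc
    have hcpos : 0 < c := by rw [hc]; linarith
    set s : ℝ := (ρ : ℝ) * τ + c with hs
    have hsτ : τ < s := by
      rw [hs, hc]; nlinarith
    set φ : (ES n) → (ES n) := fun x => (ρ : ℝ) • x + c • u with hφ
    set ψ : (ES n) → (ES n) := fun z => ((ρ : ℝ))⁻¹ • (z - c • u) with hψ
    have hcomp : ∀ x, ψ (φ x) = x := by
      intro x
      rw [hψ, hφ]
      simp only [add_sub_cancel_right, smul_smul]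
      rw [inv_mul_cancel₀ (ne_of_gt hρpos), one_smul]
    have himg : φ '' (unitCube n ∩ {x | x - τ • u ∈ E})
        ⊆ unitCube n ∩ {x | x - s • u ∈ E} := by
      rintro - ⟨x, ⟨hxQ, hxE⟩, rfl⟩
      constructor
      · intro j
        have h1 : |x j| ≤ 1 / 2 := hxQ j
        have h2 : |u j| ≤ 1 := by rw [← hu1]; exact abs_coord_le_norm u j
        have hφj : (φ x) j = (ρ : ℝ) * x j + c * u j := rfl
        rw [hφj]
        calc |(ρ : ℝ) * x j + c * u j| ≤ |(ρ : ℝ) * x j| + |c * u j| := abs_add_le _ _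
          _ = (ρ : ℝ) * |x j| + c * |u j| := by
              rw [abs_mul, abs_mul, abs_of_nonneg (le_of_lt hρpos), abs_of_nonneg (le_of_lt hcpos)]
          _ ≤ (ρ : ℝ) * (1 / 2) + c * 1 := by
              gcongr
          _ ≤ 1 / 2 := by rw [hc]; nlinarith
      · show φ x - s • u ∈ E
        have : φ x - s • u = (ρ : ℝ) • (x - τ • u) := by
          rw [hφ, hs]
          module
        rw [this]
        exact Submodule.smul_mem _ _ hxE
    have hLip : LipschitzWith ρ⁻¹ ψ := by
      refine LipschitzWith.of_dist_le_mul fun z w => ?_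
      rw [hψ]
      simp only [dist_eq_norm, ← smul_sub]
      have h9 : z - c • u - (w - c • u) = z - w := by module
      rw [h9, norm_smul, Real.norm_eq_abs, abs_of_nonneg (by positivity)]
      simp
    have hchain : f (τ • u) ≤ ((ρ⁻¹ : NNReal) : ENNReal) ^ ((n - d : ℕ) : ℝ) * t := by
      calc f (τ • u) = μH[((n - d : ℕ) : ℝ)] (unitCube n ∩ {x | x - τ • u ∈ E}) := hf _
        _ = μH[((n - d : ℕ) : ℝ)]
            (ψ '' (φ '' (unitCube n ∩ {x | x - τ • u ∈ E}))) := by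
            rw [← Set.image_comp]
            have : ψ ∘ φ = id := funext hcomp
            rw [this, Set.image_id]
        _ ≤ ((ρ⁻¹ : NNReal) : ENNReal) ^ ((n - d : ℕ) : ℝ)
            * μH[((n - d : ℕ) : ℝ)] (φ '' (unitCube n ∩ {x | x - τ • u ∈ E})) :=
            hLip.hausdorffMeasure_image_le hm0 _
        _ ≤ ((ρ⁻¹ : NNReal) : ENNReal) ^ ((n - d : ℕ) : ℝ)
            * μH[((n - d : ℕ) : ℝ)] (unitCube n ∩ {x | x - s • u ∈ E}) :=
            mul_le_mul_right (measure_mono himg) _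
        _ = ((ρ⁻¹ : NNReal) : ENNReal) ^ ((n - d : ℕ) : ℝ) * f (s • u) := by rw [hf]
        _ ≤ ((ρ⁻¹ : NNReal) : ENNReal) ^ ((n - d : ℕ) : ℝ) * t := by
            gcongr
            exact hbeyond s hsτ
    calc (ρ : ENNReal) ^ ((n - d : ℕ) : ℝ) * f (τ • u)
        ≤ (ρ : ENNReal) ^ ((n - d : ℕ) : ℝ)
          * (((ρ⁻¹ : NNReal) : ENNReal) ^ ((n - d : ℕ) : ℝ) * t) := by
          gcongr
      _ = ((ρ : ENNReal) ^ ((n - d : ℕ) : ℝ)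
          * ((ρ⁻¹ : NNReal) : ENNReal) ^ ((n - d : ℕ) : ℝ)) * t := by ring
      _ = t := by
          rw [← ENNReal.mul_rpow_of_ne_top ENNReal.coe_ne_top ENNReal.coe_ne_top,
            ← ENNReal.coe_mul, mul_inv_cancel₀ hρ0]
          simp
  -- conclude by letting ρ → 1
  refine ENNReal.le_of_forall_lt_one_mul_le ?_
  intro a ha
  rcases eq_or_ne a 0 with rfl | ha0
  · simp
  have hatop : a ≠ ⊤ := ne_top_of_lt (lt_trans ha ENNReal.one_lt_top)
  set r : NNReal := a.toNNReal with hr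
  have hr0 : r ≠ 0 := by
    simp [hr, ENNReal.toNNReal_eq_zero_iff, ha0, hatop]
  have hcoe : (r : ENNReal) = a := ENNReal.coe_toNNReal hatop
  have hr1 : r < 1 := by
    rw [← ENNReal.coe_lt_one_iff, hcoe]; exact ha
  set ρ : NNReal := r ^ (((n - d : ℕ) : ℝ))⁻¹ with hρ
  have hrpos : 0 < r := pos_iff_ne_zero.mpr hr0
  have hρ0 : ρ ≠ 0 := ne_of_gt (NNReal.rpow_pos hrpos)
  have hρ1 : (ρ : ℝ) < 1 := by
    rw [hρ]
    push_cast
    apply Real.rpow_lt_one (by positivity) _ (by positivity)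
    exact_mod_cast hr1
  have h1 : ρ ^ ((n - d : ℕ) : ℝ) = r := by
    rw [hρ, ← NNReal.rpow_mul, inv_mul_cancel₀ hmne, NNReal.rpow_one]
  have hrw : (ρ : ENNReal) ^ ((n - d : ℕ) : ℝ) = a := by
    rw [← ENNReal.coe_rpow_of_ne_zero hρ0, h1, hcoe]
  rw [← hrw]
  exact key ρ hρ0 hρ1


/-- An orthonormal basis adapted to `E`, `Eᗮ` and `u`. -/
lemma exists_adapted_basis {n d : ℕ} (hd : 0 < d) (hdn : d < n)
    (E : Submodule ℝ (ES n)) (hE : Module.finrank ℝ E = n - d)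
    (u : ES n) (huE : u ∈ Eᗮ) (hu1 : ‖u‖ = 1) :
    ∃ b : OrthonormalBasis (Fin d ⊕ Fin (n - d)) ℝ (ES n),
      (∀ j, b (.inl j) ∈ Eᗮ) ∧ (∀ i, b (.inr i) ∈ E) ∧ b (.inl ⟨0, hd⟩) = u := by
  have hperp : Module.finrank ℝ Eᗮ = d := by
    have h := Submodule.finrank_add_finrank_orthogonal E
    rw [hE, finrank_euclideanSpace_fin] at h
    omega
  -- orthonormal basis of Eᗮ starting with u
  have hcard2 : Module.finrank ℝ Eᗮ = Fintype.card (Fin d) := by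
    rw [hperp, Fintype.card_fin]
  have hone : Orthonormal ℝ (({⟨0, hd⟩} : Set (Fin d)).restrict
      (fun _ : Fin d => (⟨u, huE⟩ : Eᗮ))) := by
    constructor
    · intro i
      show ‖(⟨u, huE⟩ : Eᗮ)‖ = 1
      have : ‖(⟨u, huE⟩ : Eᗮ)‖ = ‖u‖ := rfl
      rw [this, hu1]
    · intro i j hij
      exfalso
      apply hij
      ext
      have hi := i.2
      have hj := j.2
      simp only [Set.mem_singleton_iff] at hi hj
      rw [hi, hj]
  obtain ⟨b₂, hb₂⟩ := hone.exists_orthonormalBasis_extension_of_card_eq hcard2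
  have hb₂0 : b₂ ⟨0, hd⟩ = ⟨u, huE⟩ := hb₂ _ rfl
  -- orthonormal basis of E
  let b₁ : OrthonormalBasis (Fin (n - d)) ℝ E :=
    (stdOrthonormalBasis ℝ E).reindex (finCongr hE)
  -- the combined family
  set w : (Fin d ⊕ Fin (n - d)) → (ES n) :=
    Sum.elim (fun j => (b₂ j : ES n)) (fun i => (b₁ i : ES n)) with hw
  have horth : Orthonormal ℝ w := by
    rw [orthonormal_iff_ite]
    rintro (j₁ | i₁) (j₂ | i₂)
    · have := orthonormal_iff_ite.mp b₂.orthonormal j₁ j₂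
      simp only [hw, Sum.elim_inl, Submodule.coe_inner] at *
      simpa using this
    · simp only [hw, Sum.elim_inl, Sum.elim_inr]
      rw [if_neg (by simp)]
      exact Submodule.inner_left_of_mem_orthogonal (b₁ i₂).2 (b₂ j₁).2
    · simp only [hw, Sum.elim_inl, Sum.elim_inr]
      rw [if_neg (by simp)]
      exact Submodule.inner_right_of_mem_orthogonal (b₁ i₁).2 (b₂ j₂).2
    · have := orthonormal_iff_ite.mp b₁.orthonormal i₁ i₂
      simp only [hw, Sum.elim_inr, Submodule.coe_inner] at *
      simpa using this
  have hcard : Module.finrank ℝ (ES n) = Fintype.card (Fin d ⊕ Fin (n - d)) := by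
    rw [finrank_euclideanSpace_fin]
    simp only [Fintype.card_sum, Fintype.card_fin]
    omega
  have huniv : Orthonormal ℝ ((Set.univ : Set (Fin d ⊕ Fin (n - d))).restrict w) :=
    horth.comp _ Subtype.coe_injective
  obtain ⟨b, hb⟩ := huniv.exists_orthonormalBasis_extension_of_card_eq hcard
  refine ⟨b, fun j => ?_, fun i => ?_, ?_⟩
  · rw [hb _ trivial]; exact (b₂ j).2
  · rw [hb _ trivial]; exact (b₁ i).2
  · rw [hb _ trivial]
    show (b₂ ⟨0, hd⟩ : ES n) = u
    rw [hb₂0]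


lemma inner_comb (b : OrthonormalBasis (Fin d ⊕ Fin (n - d)) ℝ (ES n))
    (k : Fin d ⊕ Fin (n - d)) (y : Fin d → ℝ) (z : Fin (n - d) → ℝ) :
    ⟪b k, (∑ j, y j • b (.inl j)) + ∑ i, z i • b (.inr i)⟫ = Sum.elim y z k := by
  classical
  have hb := orthonormal_iff_ite.mp b.orthonormal
  rw [inner_add_right, inner_sum, inner_sum]
  simp_rw [real_inner_smul_right, hb]
  cases k with
  | inl j => simp
  | inr i => simp

lemma cube_coord_fubini (b : OrthonormalBasis (Fin d ⊕ Fin (n - d)) ℝ (ES n))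
    (G : Set (Fin d → ℝ)) (hG : MeasurableSet G) :
    volume {x : ES n | x ∈ unitCube n ∧ (fun j => ⟪b (.inl j), x⟫) ∈ G}
      = ∫⁻ y in G, volume {z : Fin (n - d) → ℝ |
          ((∑ j, y j • b (.inl j)) + ∑ i, z i • b (.inr i)) ∈ unitCube n} := by
  classical
  set e1 : (ES n) ≃ᵐ EuclideanSpace ℝ (Fin d ⊕ Fin (n - d)) := b.measurableEquiv with he1
  set e2 := (MeasurableEquiv.toLp 2 (Fin d ⊕ Fin (n - d) → ℝ)).symm with he2
  set e3 := MeasurableEquiv.sumPiEquivProdPi (fun _ : Fin d ⊕ Fin (n - d) => ℝ) with he3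
  have mp1 : MeasurePreserving e1 volume volume := b.measurePreserving_measurableEquiv
  have mp2 : MeasurePreserving e2 volume volume :=
    EuclideanSpace.volume_preserving_symm_measurableEquiv_toLp _
  have mp3 : MeasurePreserving e3 volume volume := by
    have h := MeasureTheory.volume_measurePreserving_sumPiEquivProdPi_symm
      (fun _ : Fin d ⊕ Fin (n - d) => ℝ)
    have h2 := h.symm e3.symm
    simpa using h2
  set Θ : (ES n) ≃ᵐ (Fin d → ℝ) × (Fin (n - d) → ℝ) := (e1.trans e2).trans e3 with hΘ
  have mpΘ : MeasurePreserving Θ volume volume := mp3.comp (mp2.comp mp1)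
  have hcoord : ∀ x : ES n, Θ x = (fun j => ⟪b (.inl j), x⟫, fun i => ⟪b (.inr i), x⟫) := by
    intro x
    have h1 : Θ x = (fun j => b.repr x (.inl j), fun i => b.repr x (.inr i)) := rfl
    rw [h1]
    refine Prod.ext ?_ ?_ <;> · funext k; exact b.repr_apply_apply x _
  have hsymm : ∀ (y : Fin d → ℝ) (z : Fin (n - d) → ℝ),
      Θ.symm (y, z) = (∑ j, y j • b (.inl j)) + ∑ i, z i • b (.inr i) := by
    intro y z
    set wv := (∑ j, y j • b (.inl j)) + ∑ i, z i • b (.inr i) with hwv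
    have hw2 : Θ wv = (y, z) := by
      rw [hcoord]
      refine Prod.ext ?_ ?_ <;> · funext k; exact inner_comb b _ y z
    have h2 : Θ.symm (Θ wv) = Θ.symm (y, z) := by rw [hw2]
    rw [Θ.symm_apply_apply] at h2
    exact h2.symm
  set P : Set ((Fin d → ℝ) × (Fin (n - d) → ℝ)) :=
    {p | p.1 ∈ G ∧ Θ.symm p ∈ unitCube n} with hP
  have hPm : MeasurableSet P := by
    refine MeasurableSet.inter ?_ ?_
    · exact measurable_fst hG
    · exact Θ.symm.measurable measurableSet_unitCube
  have hSP : {x : ES n | x ∈ unitCube n ∧ (fun j => ⟪b (.inl j), x⟫) ∈ G} = Θ ⁻¹' P := by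
    ext x
    simp only [Set.mem_setOf_eq, Set.mem_preimage, hP, hcoord x, Θ.symm_apply_apply]
    constructor
    · rintro ⟨h1, h2⟩
      refine ⟨h2, ?_⟩
      rw [← hcoord x, Θ.symm_apply_apply]
      exact h1
    · rintro ⟨h1, h2⟩
      rw [← hcoord x, Θ.symm_apply_apply] at h2
      exact ⟨h2, h1⟩
  have hvol : volume {x : ES n | x ∈ unitCube n ∧ (fun j => ⟪b (.inl j), x⟫) ∈ G}
      = volume P := by
    rw [hSP]
    exact mpΘ.measure_preimage hPm.nullMeasurableSet
  rw [hvol]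
  have hprodmeas : (volume : Measure ((Fin d → ℝ) × (Fin (n - d) → ℝ)))
      = (volume : Measure (Fin d → ℝ)).prod (volume : Measure (Fin (n - d) → ℝ)) :=
    Measure.volume_eq_prod _ _
  rw [hprodmeas, Measure.prod_apply hPm]
  have hsec : (fun y => (volume : Measure (Fin (n - d) → ℝ)) (Prod.mk y ⁻¹' P))
      = G.indicator (fun y' => volume {z : Fin (n - d) → ℝ |
          ((∑ j, y' j • b (.inl j)) + ∑ i, z i • b (.inr i)) ∈ unitCube n}) := by
    funext y
    by_cases hy : y ∈ G
    · rw [Set.indicator_of_mem hy]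
      congr 1
      ext z
      simp only [Set.mem_preimage, hP, Set.mem_setOf_eq, hsymm y z]
      exact ⟨fun h => h.2, fun h => ⟨hy, h⟩⟩
    · rw [Set.indicator_of_notMem hy]
      have : Prod.mk y ⁻¹' P = ∅ := by
        ext z
        simp only [Set.mem_preimage, hP, Set.mem_setOf_eq, Set.mem_empty_iff_false, iff_false]
        exact fun h => hy h.1
      rw [this]
      simp
  rw [hsec, lintegral_indicator hG]

lemma slice_vol_le (hdn : d < n) (E : Submodule ℝ (ES n))
    (f : (ES n) → ENNReal)
    (hf : ∀ y, f y = μH[((n - d : ℕ) : ℝ)] (unitCube n ∩ {x | x - y ∈ E}))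
    (b : OrthonormalBasis (Fin d ⊕ Fin (n - d)) ℝ (ES n))
    (hbr : ∀ i, b (.inr i) ∈ E) (y : Fin d → ℝ) :
    volume {z : Fin (n - d) → ℝ |
        ((∑ j, y j • b (.inl j)) + ∑ i, z i • b (.inr i)) ∈ unitCube n}
      ≤ f (∑ j, y j • b (.inl j)) := by
  classical
  haveI : Nonempty (Fin (n - d)) := ⟨⟨0, Nat.sub_pos_of_lt hdn⟩⟩
  have hmr0 : (0 : ℝ) ≤ ((n - d : ℕ) : ℝ) := by positivity
  set Y : ES n := ∑ j, y j • b (.inl j) with hY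
  set em : (Fin (n - d) → ℝ) → (ES n) := fun z => Y + ∑ i, z i • b (.inr i) with hι
  set Z : Set (Fin (n - d) → ℝ) := {z | em z ∈ unitCube n} with hZ
  set ρ : (ES n) → (Fin (n - d) → ℝ) := fun x i => ⟪b (.inr i), x⟫ with hρ
  have hρι : ∀ z, ρ (em z) = z := by
    intro z
    funext i
    have := inner_comb b (.inr i) y z
    simpa [hρ, hι, hY] using this
  have hρLip : LipschitzWith 1 ρ := by
    refine LipschitzWith.of_dist_le_mul fun x x' => ?_
    have hd1 : dist (ρ x) (ρ x') ≤ dist x x' := by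
      refine (dist_pi_le_iff dist_nonneg).mpr fun i => ?_
      rw [hρ, Real.dist_eq, ← inner_sub_right, dist_eq_norm]
      calc |⟪b (.inr i), x - x'⟫| ≤ ‖b (.inr i)‖ * ‖x - x'‖ := abs_real_inner_le_norm _ _
        _ = ‖x - x'‖ := by rw [b.orthonormal.1 (.inr i), one_mul]
    simpa using hd1
  have himg : em '' Z ⊆ unitCube n ∩ {x | x - Y ∈ E} := by
    rintro - ⟨z, hz, rfl⟩
    refine ⟨hz, ?_⟩
    show em z - Y ∈ E
    rw [hι]
    simp only [add_sub_cancel_left]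
    exact Submodule.sum_mem _ fun i _ => Submodule.smul_mem _ _ (hbr i)
  have hcard : (μH[(Fintype.card (Fin (n - d)) : ℝ)] : Measure (Fin (n - d) → ℝ)) = volume :=
    MeasureTheory.hausdorffMeasure_pi_real
  rw [Fintype.card_fin] at hcard
  have hZvol : (volume : Measure (Fin (n - d) → ℝ)) Z = μH[((n - d : ℕ) : ℝ)] Z := by
    rw [hcard]
  calc (volume : Measure (Fin (n - d) → ℝ)) Z = μH[((n - d : ℕ) : ℝ)] Z := hZvol
    _ = μH[((n - d : ℕ) : ℝ)] (ρ '' (em '' Z)) := by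
        rw [← Set.image_comp]
        have : ρ ∘ em = id := funext hρι
        rw [this, Set.image_id]
    _ ≤ ((1 : NNReal) : ENNReal) ^ ((n - d : ℕ) : ℝ) * μH[((n - d : ℕ) : ℝ)] (em '' Z) :=
        hρLip.hausdorffMeasure_image_le hmr0 _
    _ = μH[((n - d : ℕ) : ℝ)] (em '' Z) := by
        rw [ENNReal.coe_one, ENNReal.one_rpow, one_mul]
    _ ≤ μH[((n - d : ℕ) : ℝ)] (unitCube n ∩ {x | x - Y ∈ E}) := measure_mono himg
    _ = f Y := (hf Y).symm

lemma partC {n d : ℕ} (hd : 0 < d) (hdn : d < n) (E : Submodule ℝ (ES n))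
    (hE : Module.finrank ℝ E = n - d)
    (f : (ES n) → ENNReal)
    (hf : ∀ y, f y = μH[((n - d : ℕ) : ℝ)] (unitCube n ∩ {x | x - y ∈ E}))
    (u : ES n) (huE : u ∈ Eᗮ) (hu1 : ‖u‖ = 1)
    (τ : ℝ) (hτ0 : 0 ≤ τ) (t : ENNReal) (ht0 : t ≠ 0)
    (hbeyond : ∀ y, y ∈ Eᗮ → τ < ⟪y, u⟫ → f y ≤ t) :
    ENNReal.ofReal (((2 : ℝ) ^ d + d + 1) ^ (-(1 + (d : ℝ) / 2)) *
      (volume {x ∈ unitCube n | τ ≤ ⟪x, u⟫}).toReal ^ (1 + (d : ℝ) / 2)) ≤ t := by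
  classical
  set e : ℝ := 1 + (d : ℝ) / 2 with he
  set K : ℝ := (2 : ℝ) ^ d + d + 1 with hK
  have h2dpos : (0:ℝ) < 2 ^ d := by positivity
  have hK1 : (1 : ℝ) ≤ K := by
    rw [hK]
    have : (0:ℝ) ≤ d := Nat.cast_nonneg d
    nlinarith
  have hKpos : (0:ℝ) < K := by linarith
  have he0 : (0:ℝ) ≤ e := by rw [he]; positivity
  have hcpos : (0:ℝ) < K ^ (-e) := Real.rpow_pos_of_pos hKpos _
  have hc_le1 : K ^ (-e) ≤ 1 :=
    Real.rpow_le_one_of_one_le_of_nonpos hK1 (by linarith)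
  set A : ENNReal := volume {x | x ∈ unitCube n ∧ τ ≤ ⟪x, u⟫} with hA
  have hA1 : A ≤ 1 := by
    rw [hA, ← volume_unitCube (n := n)]
    exact measure_mono fun x hx => hx.1
  have hAtop : A ≠ ⊤ := ne_top_of_le_ne_top ENNReal.one_ne_top hA1
  have ha0 : (0:ℝ) ≤ A.toReal := ENNReal.toReal_nonneg
  have ha1 : A.toReal ≤ 1 :=
    ENNReal.toReal_le_of_le_ofReal zero_le_one (by simpa using hA1)
  rcases le_or_gt 1 t with ht1 | ht1
  · calc ENNReal.ofReal (K ^ (-e) * A.toReal ^ e) ≤ ENNReal.ofReal 1 := by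
          apply ENNReal.ofReal_le_ofReal
          have hae : A.toReal ^ e ≤ 1 := Real.rpow_le_one ha0 ha1 he0
          have h9 : (0:ℝ) ≤ A.toReal ^ e := Real.rpow_nonneg ha0 _
          nlinarith
      _ = 1 := ENNReal.ofReal_one
      _ ≤ t := ht1
  -- main branch
  have httop : t ≠ ⊤ := ne_top_of_lt (lt_of_lt_of_le ht1 le_top)
  set θ : ℝ := t.toReal with hθdef
  have hθpos : 0 < θ := ENNReal.toReal_pos ht0 httop
  set β : ℝ := 1 / ((d : ℝ) + 2) with hβ
  set α : ℝ := 2 / ((d : ℝ) + 2) with hα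
  have hd2 : (0:ℝ) < (d:ℝ) + 2 := by positivity
  set W : ℝ := θ ^ (-β) with hW
  have hWpos : 0 < W := Real.rpow_pos_of_pos hθpos _
  have hθα_pos : 0 < θ ^ α := Real.rpow_pos_of_pos hθpos _
  obtain ⟨b, hbl, hbr, hbu⟩ := exists_adapted_basis hd hdn E hE u huE hu1
  set z0 : Fin d := ⟨0, hd⟩ with hz0
  have hcomm : ∀ x : ES n, ⟪x, u⟫ = ⟪b (.inl z0), x⟫ := by
    intro x; rw [hbu]; exact real_inner_comm u x
  -- coordinate regions
  set G0 : Set (Fin d → ℝ) := (fun y : Fin d → ℝ => y z0) ⁻¹' {τ} with hG0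
  set G1 : Set (Fin d → ℝ) := ((fun y : Fin d → ℝ => y z0) ⁻¹' Set.Ioc τ (τ + W)) ∩
      ⋂ j, ((fun y : Fin d → ℝ => y j) ⁻¹' Set.Icc (-W) W) with hG1
  have hG0m : MeasurableSet G0 := (measurable_pi_apply z0) (measurableSet_singleton τ)
  have hG1m : MeasurableSet G1 :=
    ((measurable_pi_apply z0) measurableSet_Ioc).inter
      (MeasurableSet.iInter fun j => (measurable_pi_apply j) measurableSet_Icc)
  -- cover
  have hcover : {x : ES n | x ∈ unitCube n ∧ τ ≤ ⟪x, u⟫}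
      ⊆ ({x | x ∈ unitCube n ∧ (fun j => ⟪b (.inl j), x⟫) ∈ G0}
        ∪ {x | x ∈ unitCube n ∧ (fun j => ⟪b (.inl j), x⟫) ∈ G1})
        ∪ ({x | x ∈ unitCube n ∧ W ≤ |⟪x, u⟫|}
        ∪ ⋃ j : Fin d, {x | x ∈ unitCube n ∧ W ≤ |⟪x, b (.inl j)⟫|}) := by
    rintro x ⟨hxQ, hxτ⟩
    rw [hcomm x] at hxτ
    rcases eq_or_lt_of_le hxτ with heq | hlt
    · exact Or.inl (Or.inl ⟨hxQ, heq.symm⟩)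
    by_cases hbig : τ + W < ⟪b (.inl z0), x⟫
    · refine Or.inr (Or.inl ⟨hxQ, ?_⟩)
      rw [hcomm x]
      have h8 : W ≤ ⟪b (.inl z0), x⟫ := by linarith
      exact h8.trans (le_abs_self _)
    by_cases hR : ∀ j, |⟪b (.inl j), x⟫| ≤ W
    · push_neg at hbig
      refine Or.inl (Or.inr ⟨hxQ, ⟨⟨hlt, hbig⟩, ?_⟩⟩)
      refine Set.mem_iInter.mpr fun j => ?_
      have := hR j
      rw [abs_le] at this
      exact this
    · push_neg at hR
      obtain ⟨j, hj⟩ := hR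
      refine Or.inr (Or.inr (Set.mem_iUnion.mpr ⟨j, ⟨hxQ, ?_⟩⟩))
      rw [real_inner_comm] at hj
      exact hj.le
  -- T0 has measure zero
  have hG0vol : (volume : Measure (Fin d → ℝ)) G0 = 0 := by
    have hsub : G0 ⊆ Set.pi Set.univ (fun j => if j = z0 then ({τ} : Set ℝ) else Set.univ) := by
      intro y hy j _
      show y j ∈ (if j = z0 then ({τ} : Set ℝ) else Set.univ)
      by_cases h : j = z0
      · rw [if_pos h, h]; exact hy
      · rw [if_neg h]; trivial
    refine le_antisymm (le_trans (measure_mono hsub) ?_) zero_le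
    rw [volume_pi_pi]
    refine le_of_eq (Finset.prod_eq_zero (Finset.mem_univ z0) ?_)
    simp
  have hT0 : volume {x : ES n | x ∈ unitCube n ∧ (fun j => ⟪b (.inl j), x⟫) ∈ G0} = 0 := by
    rw [cube_coord_fubini b G0 hG0m]
    refine le_antisymm (le_trans (lintegral_mono fun _ => le_top) ?_) zero_le
    rw [setLIntegral_const, hG0vol, mul_zero]
  -- T1 bound
  have hG1vol : (volume : Measure (Fin d → ℝ)) G1
      ≤ ENNReal.ofReal (W * (2 * W) ^ (d - 1)) := by
    have hsub : G1 ⊆ Set.pi Set.univ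
        (fun j => if j = z0 then Set.Ioc τ (τ + W) else Set.Icc (-W) W) := by
      rintro y ⟨hy0, hyj⟩ j _
      show y j ∈ (if j = z0 then Set.Ioc τ (τ + W) else Set.Icc (-W) W)
      by_cases h : j = z0
      · rw [if_pos h, h]; exact hy0
      · rw [if_neg h]; exact Set.mem_iInter.mp hyj j
    refine le_trans (measure_mono hsub) ?_
    rw [volume_pi_pi]
    have hval : ∀ j : Fin d, volume (if j = z0 then Set.Ioc τ (τ + W) else Set.Icc (-W) W)
        = if j = z0 then ENNReal.ofReal W else ENNReal.ofReal (2 * W) := by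
      intro j
      by_cases h : j = z0
      · rw [if_pos h, if_pos h, Real.volume_Ioc, add_sub_cancel_left]
      · rw [if_neg h, if_neg h, Real.volume_Icc]
        congr 1; ring
    rw [Finset.prod_congr rfl fun j _ => hval j,
      Finset.prod_eq_mul_prod_sdiff_singleton_of_mem (Finset.mem_univ z0), if_pos rfl]
    have hrest : ∀ j ∈ Finset.univ \ {z0},
        (if j = z0 then ENNReal.ofReal W else ENNReal.ofReal (2 * W))
          = ENNReal.ofReal (2 * W) := fun j hj =>
      if_neg (by simpa using (Finset.mem_sdiff.mp hj).2)
    rw [Finset.prod_congr rfl hrest, Finset.prod_const]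
    have hcard : (Finset.univ \ {z0} : Finset (Fin d)).card = d - 1 := by
      rw [Finset.card_sdiff_of_subset (by simp), Finset.card_univ, Fintype.card_fin,
        Finset.card_singleton]
    rw [hcard, ← ENNReal.ofReal_pow (by positivity), ← ENNReal.ofReal_mul (le_of_lt hWpos)]
  have hT1 : volume {x : ES n | x ∈ unitCube n ∧ (fun j => ⟪b (.inl j), x⟫) ∈ G1}
      ≤ t * ENNReal.ofReal (W * (2 * W) ^ (d - 1)) := by
    rw [cube_coord_fubini b G1 hG1m]
    calc ∫⁻ y in G1, volume {z : Fin (n - d) → ℝ |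
            ((∑ j, y j • b (.inl j)) + ∑ i, z i • b (.inr i)) ∈ unitCube n}
        ≤ ∫⁻ _ in G1, t := by
          refine setLIntegral_mono' hG1m fun y hy => ?_
          refine le_trans (slice_vol_le hdn E f hf b hbr y) ?_
          refine hbeyond _ (Submodule.sum_mem _ fun j _ => Submodule.smul_mem _ _ (hbl j)) ?_
          have h1 := inner_comb b (.inl z0) y 0
          simp only [Sum.elim_inl, Pi.zero_apply, zero_smul, Finset.sum_const_zero, add_zero] at h1
          rw [real_inner_comm, ← hbu, h1]
          exact hy.1.1
      _ = t * volume G1 := setLIntegral_const _ _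
      _ ≤ t * ENNReal.ofReal (W * (2 * W) ^ (d - 1)) := mul_le_mul_right hG1vol t
  -- tail bounds
  have hC1 : volume {x : ES n | x ∈ unitCube n ∧ W ≤ |⟪x, u⟫|}
      ≤ ENNReal.ofReal (1 / (12 * W ^ 2)) := cheb u hu1 W hWpos
  have hCU : volume (⋃ j : Fin d, {x : ES n | x ∈ unitCube n ∧ W ≤ |⟪x, b (.inl j)⟫|})
      ≤ (d : ENNReal) * ENNReal.ofReal (1 / (12 * W ^ 2)) := by
    refine le_trans (measure_iUnion_le _) ?_
    rw [tsum_fintype]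
    refine le_trans (Finset.sum_le_sum fun j (_ : j ∈ Finset.univ) =>
      cheb (b (.inl j)) (b.orthonormal.1 _) W hWpos) ?_
    rw [Finset.sum_const, Finset.card_univ, Fintype.card_fin, nsmul_eq_mul]
  -- total
  have htotal : A ≤ ENNReal.ofReal (θ * (W * (2 * W) ^ (d - 1)))
      + (ENNReal.ofReal (1 / (12 * W ^ 2)) + ENNReal.ofReal ((d : ℝ) * (1 / (12 * W ^ 2)))) := by
    rw [hA]
    refine le_trans (measure_mono hcover) ?_
    refine le_trans (measure_union_le _ _) ?_
    refine add_le_add (le_trans (measure_union_le _ _) ?_) (le_trans (measure_union_le _ _) ?_)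
    · rw [hT0, zero_add]
      refine le_trans hT1 ?_
      rw [← ENNReal.ofReal_toReal httop, ← hθdef, ← ENNReal.ofReal_mul hθpos.le]
    · refine add_le_add hC1 (le_trans hCU ?_)
      rw [← ENNReal.ofReal_natCast d, ← ENNReal.ofReal_mul (Nat.cast_nonneg d)]
  -- real arithmetic
  have hdm1cast : ((d - 1 : ℕ) : ℝ) = (d : ℝ) - 1 := by
    have : (1 : ℕ) ≤ d := hd
    push_cast [Nat.cast_sub this]
    ring
  have hWW : W * W ^ (d - 1) = θ ^ (-(β * (d : ℝ))) := by
    rw [hW, ← Real.rpow_natCast (θ ^ (-β)) (d - 1), ← Real.rpow_mul hθpos.le,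
      ← Real.rpow_add hθpos]
    congr 1
    rw [hdm1cast]
    ring
  have hθW : θ * θ ^ (-(β * (d : ℝ))) = θ ^ α := by
    nth_rewrite 1 [← Real.rpow_one θ]
    rw [← Real.rpow_add hθpos]
    congr 1
    rw [hβ, hα]
    field_simp
    ring
  have hterm1 : θ * (W * (2 * W) ^ (d - 1)) = 2 ^ (d - 1) * θ ^ α := by
    rw [mul_pow]
    have h1 : θ * (W * ((2:ℝ) ^ (d - 1) * W ^ (d - 1)))
        = (2:ℝ) ^ (d - 1) * (θ * (W * W ^ (d - 1))) := by ring
    rw [h1, hWW, hθW]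
  have hW2 : 1 / (12 * W ^ 2) = θ ^ α / 12 := by
    rw [hW, ← Real.rpow_natCast (θ ^ (-β)) 2, ← Real.rpow_mul hθpos.le]
    rw [show -β * ((2:ℕ) : ℝ) = -α by rw [hβ, hα]; push_cast; ring]
    rw [Real.rpow_neg hθpos.le]
    rw [div_eq_div_iff (by positivity) (by norm_num)]
    field_simp
  have hSle : θ * (W * (2 * W) ^ (d - 1)) + (1 / (12 * W ^ 2) + (d : ℝ) * (1 / (12 * W ^ 2)))
      ≤ K * θ ^ α := by
    rw [hterm1, hW2, hK]
    have h2 : (2:ℝ) ^ (d - 1) ≤ 2 ^ d := pow_le_pow_right₀ (by norm_num) (Nat.sub_le d 1)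
    have h3 : (2:ℝ) ^ (d - 1) * θ ^ α ≤ 2 ^ d * θ ^ α :=
      mul_le_mul_of_nonneg_right h2 hθα_pos.le
    have h4 : (0:ℝ) ≤ (d : ℝ) := Nat.cast_nonneg d
    nlinarith [mul_nonneg h4 hθα_pos.le]
  have haK : A.toReal ≤ K * θ ^ α := by
    refine ENNReal.toReal_le_of_le_ofReal (by positivity) ?_
    refine le_trans htotal ?_
    rw [← ENNReal.ofReal_add (by positivity) (by positivity),
      ← ENNReal.ofReal_add (by positivity) (by positivity)]
    exact ENNReal.ofReal_le_ofReal hSle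
  have hae : A.toReal ^ e ≤ K ^ e * θ := by
    calc A.toReal ^ e ≤ (K * θ ^ α) ^ e := Real.rpow_le_rpow ha0 haK he0
      _ = K ^ e * (θ ^ α) ^ e := Real.mul_rpow hKpos.le hθα_pos.le
      _ = K ^ e * θ := by
          rw [← Real.rpow_mul hθpos.le]
          rw [show α * e = 1 by rw [hα, he]; field_simp; ring]
          rw [Real.rpow_one]
  have hfinal : K ^ (-e) * A.toReal ^ e ≤ θ := by
    have h3 : K ^ (-e) * (K ^ e * θ) = θ := by
      rw [← mul_assoc, ← Real.rpow_add hKpos]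
      simp
    calc K ^ (-e) * A.toReal ^ e ≤ K ^ (-e) * (K ^ e * θ) :=
        mul_le_mul_of_nonneg_left hae hcpos.le
      _ = θ := h3
  calc ENNReal.ofReal (K ^ (-e) * A.toReal ^ e) ≤ ENNReal.ofReal θ :=
      ENNReal.ofReal_le_ofReal hfinal
    _ = t := ENNReal.ofReal_toReal httop

end SuppHyp

theorem supporting_hyperplane_density_bound (d : ℕ) (hd : 0 < d) :
    ∃ c : ℝ, 0 < c ∧ ∀ n : ℕ, d < n →
      ∀ E : Submodule ℝ (EuclideanSpace ℝ (Fin n)),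
        Module.finrank ℝ E = n - d →
        ∀ v : EuclideanSpace ℝ (Fin n), v ∈ Eᗮ → ‖v‖ = 1 →
          ∀ f : EuclideanSpace ℝ (Fin n) → ENNReal,
            (∀ y, f y = μH[((n - d : ℕ) : ℝ)] (unitCube n ∩ {x | x - y ∈ E})) →
            ∀ D : Set (EuclideanSpace ℝ (Fin n)),
              D = {y | y ∈ Eᗮ ∧ f ((1 / 2 : ℝ) • v) ≤ f y} →
              ∀ u : EuclideanSpace ℝ (Fin n), u ∈ Eᗮ → ‖u‖ = 1 →
                ∀ τ : ℝ, 0 ≤ τ →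
                  ⟪(1 / 2 : ℝ) • v, u⟫ = τ →
                  (∀ y ∈ D, ⟪y, u⟫ ≤ τ) →
                  τ ≤ 1 / 2 ∧
                    max (f (τ • u))
                        (ENNReal.ofReal
                          (c * (volume {x ∈ unitCube n | τ ≤ ⟪x, u⟫}).toReal
                              ^ (1 + (d : ℝ) / 2))) ≤
                      f ((1 / 2 : ℝ) • v) := by
  refine ⟨((2 : ℝ) ^ d + d + 1) ^ (-(1 + (d : ℝ) / 2)), ?_, ?_⟩
  · apply Real.rpow_pos_of_pos
    positivity
  intro n hdn E hE v hvE hv1 f hf D hD u huE hu1 τ hτ0 hτeq hsupp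
  -- the level
  set t := f ((1 / 2 : ℝ) • v) with ht_def
  -- basic inner product facts
  have hvu : ⟪v, u⟫ ≤ 1 := by
    have := real_inner_le_norm v u
    rw [hv1, hu1] at this; linarith
  have hτeq' : τ = (1 / 2 : ℝ) * ⟪v, u⟫ := by
    rw [← hτeq, real_inner_smul_left]
  have hτhalf : τ ≤ 1 / 2 := by rw [hτeq']; linarith
  have huu : ⟪u, u⟫ = (1 : ℝ) := by
    rw [real_inner_self_eq_norm_mul_norm, hu1]; norm_num
  -- points beyond the hyperplane have small f
  have hbeyond : ∀ y, y ∈ Eᗮ → τ < ⟪y, u⟫ → f y ≤ t := by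
    intro y hy hyu
    by_contra hcon
    push_neg at hcon
    have hyD : y ∈ D := by rw [hD]; exact ⟨hy, le_of_lt hcon⟩
    exact absurd (hsupp y hyD) (not_le.mpr hyu)
  have ht0 : t ≠ 0 := by
    intro h0
    have hmem : ((τ + 1) • u) ∈ D := by
      rw [hD]
      refine ⟨Submodule.smul_mem _ _ huE, ?_⟩
      rw [h0]; exact zero_le
    have := hsupp _ hmem
    rw [real_inner_smul_left, huu] at this
    linarith
  constructor
  · exact hτhalf
  refine max_le ?_ ?_
  · -- part B
    rcases eq_or_lt_of_le hτhalf with heq | hlt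
    · -- τ = 1/2 forces u = v
      have hvu1 : ⟪v, u⟫ = 1 := by rw [hτeq'] at heq; linarith
      have hveq : v = u := by
        have h2 : ‖v - u‖ ^ 2 = 0 := by
          rw [norm_sub_pow_two_real, hv1, hu1, hvu1]; ring
        have h4 : ‖v - u‖ = 0 := by nlinarith [norm_nonneg (v - u)]
        exact sub_eq_zero.mp (norm_eq_zero.mp h4)
      have hpt : τ • u = (1 / 2 : ℝ) • v := by rw [heq, hveq]
      rw [hpt]
    · refine SuppHyp.partB hdn E f hf u hu1 τ hτ0 hlt t ?_
      intro s hs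
      refine hbeyond _ (Submodule.smul_mem _ _ huE) ?_
      rw [real_inner_smul_left, huu]
      linarith
  · exact SuppHyp.partC hd hdn E hE f hf u huE hu1 τ hτ0 t ht0 hbeyond
end

section
/- For every ε > 0 there exist δ > 0 and η > 0 such that for every n and every unit vector u ∈ R^n the following holds: if J_δ = {j : |u_j| < δ} satisfies Σ_{j ∈ J_δ} u_j² > ε², then for a random vector ξ uniformly distributed in Q_n one has P(⟨ξ,u⟩ ≥ 1) ≥ η; equivalently, vol_n({x ∈ Q_n : ⟨x,u⟩ ≥ 1}) ≥ η. -/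
open MeasureTheory RealInnerProductSpace

/-! Under the uniform measure on the cube the coordinates are independent, so for disjoint
blocks `A` of coordinates the partial sums `∑_{j ∈ A} u_j x_j` are independent. A block of mass
`v = ∑_{j ∈ A} u_j²` has second moment `v / 12` and fourth moment at most `v² / 48`, so by the
Paley–Zygmund inequality and the symmetry `x ↦ -x` it exceeds `√(v / 24)` with probability at
least `1 / 24`. Coordinates with `|u_j| < δ` and total mass `> ε²` can be greedily grouped into
`m ≈ 50 / ε²` blocks of mass in `[δ², 2δ²]`, where `δ = 5 / m`. Each block then exceeds `1 / m`
with probability at least `1 / 24`, the remaining coordinates contribute a nonnegative amount with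
probability at least `1 / 2`, and independence gives `P(⟪ξ, u⟫ ≥ 1) ≥ 24⁻ᵐ / 2`. -/

open ProbabilityTheory Set

theorem paley_zygmund {Ω : Type*} [MeasurableSpace Ω] {μ : Measure Ω} [IsProbabilityMeasure μ]
    {Z : Ω → ℝ} (hZ : Measurable Z) (hZ2 : Integrable (fun ω => Z ω ^ 2) μ)
    (hZ4 : Integrable (fun ω => Z ω ^ 4) μ) {θ K : ℝ} (hθ0 : 0 ≤ θ) (hθ1 : θ < 1)
    (hσ : 0 < ∫ ω, Z ω ^ 2 ∂μ) (hK : ∫ ω, Z ω ^ 4 ∂μ ≤ K * (∫ ω, Z ω ^ 2 ∂μ) ^ 2) :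
    (1 - θ) ^ 2 / K ≤ μ.real {ω | θ * ∫ ω, Z ω ^ 2 ∂μ ≤ Z ω ^ 2} := by
  set σ2 := ∫ ω, Z ω ^ 2 ∂μ
  set E := {ω | θ * σ2 ≤ Z ω ^ 2}
  rcases le_or_gt K 0 with hK0 | hK0
  · exact (div_nonpos_of_nonneg_of_nonpos (sq_nonneg _) hK0).trans measureReal_nonneg
  -- the weight `l` optimises the AM-GM bound `z ^ 2 ≤ z ^ 4 / (4 l) + l` used on `E`
  set l := K * σ2 / (2 * (1 - θ)) with hl
  have hθ : 0 < 1 - θ := by linarith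
  have hl0 : 0 < l := by positivity
  have hE : MeasurableSet E := measurableSet_le measurable_const (hZ.pow_const 2)
  have hpt : ∀ ω, Z ω ^ 2 ≤ θ * σ2 + (Z ω ^ 4 / (4 * l) + E.indicator (fun _ => l) ω) := by
    intro ω
    have hq : 0 ≤ Z ω ^ 4 / (4 * l) := by positivity
    by_cases hω : ω ∈ E
    · rw [indicator_of_mem hω]
      have hamgm : Z ω ^ 4 / (4 * l) + l - Z ω ^ 2 = (Z ω ^ 2 - 2 * l) ^ 2 / (4 * l) := by
        field_simp; ring
      have : 0 ≤ (Z ω ^ 2 - 2 * l) ^ 2 / (4 * l) := by positivity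
      nlinarith [mul_nonneg hθ0 hσ.le]
    · rw [indicator_of_notMem hω]
      linarith [not_le.1 (show ¬θ * σ2 ≤ Z ω ^ 2 from hω)]
  have hI4 : Integrable (fun ω => Z ω ^ 4 / (4 * l)) μ := hZ4.div_const _
  have hIE : Integrable (E.indicator fun _ => l) μ := (integrable_const l).indicator hE
  have hI : Integrable (fun ω => Z ω ^ 4 / (4 * l) + E.indicator (fun _ => l) ω) μ := hI4.add hIE
  have hint : σ2 ≤ θ * σ2 + ((∫ ω, Z ω ^ 4 ∂μ) / (4 * l) + l * μ.real E) := by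
    calc σ2 ≤ ∫ ω, θ * σ2 + (Z ω ^ 4 / (4 * l) + E.indicator (fun _ => l) ω) ∂μ :=
          integral_mono hZ2 ((integrable_const _).add hI) hpt
      _ = _ := by
          rw [integral_add (integrable_const _) hI, integral_add hI4 hIE,
            integral_const, integral_div, integral_indicator_const _ hE]
          simp [mul_comm]
  have hM : (∫ ω, Z ω ^ 4 ∂μ) / (4 * l) ≤ (1 - θ) * σ2 / 2 := by
    rw [div_le_iff₀ (by positivity), hl]
    calc ∫ ω, Z ω ^ 4 ∂μ ≤ K * σ2 ^ 2 := hK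
      _ = (1 - θ) * σ2 / 2 * (4 * (K * σ2 / (2 * (1 - θ)))) := by field_simp; ring
  rw [div_le_iff₀ hK0]
  have hlp : (1 - θ) * σ2 / 2 ≤ l * μ.real E := by linarith
  rw [hl, div_mul_eq_mul_div, le_div_iff₀ (by positivity)] at hlp
  nlinarith

theorem Finset.exists_subset_sum_mem_Icc {α : Type*} {S : Finset α} {w : α → ℝ} {c : ℝ}
    (hc : 0 ≤ c) (hw : ∀ j ∈ S, w j ≤ c) (hS : c ≤ ∑ j ∈ S, w j) :
    ∃ A ⊆ S, ∑ j ∈ A, w j ∈ Set.Icc c (2 * c) := by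
  classical
  induction S using Finset.induction_on with
  | empty => exact ⟨∅, subset_rfl, by simpa using hS, by simpa using hc⟩
  | insert a S ha ih =>
    by_cases hS' : c ≤ ∑ j ∈ S, w j
    · obtain ⟨A, hAS, hA⟩ := ih (fun j hj => hw j (Finset.mem_insert_of_mem hj)) hS'
      exact ⟨A, hAS.trans (Finset.subset_insert a S), hA⟩
    · refine ⟨insert a S, subset_rfl, hS, ?_⟩
      rw [Finset.sum_insert ha]
      linarith [hw a (Finset.mem_insert_self a S)]

section Cube

noncomputable def centeredUniform : Measure ℝ := volume.restrict (Icc (-1/2) (1/2))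

instance : IsProbabilityMeasure centeredUniform :=
  ⟨by norm_num [centeredUniform]⟩

theorem integral_pow_centeredUniform (k : ℕ) :
    ∫ t, t ^ k ∂centeredUniform = ((1/2 : ℝ) ^ (k + 1) - (-1/2) ^ (k + 1)) / (k + 1) := by
  rw [centeredUniform, integral_Icc_eq_integral_Ioc,
    ← intervalIntegral.integral_of_le (by norm_num), integral_pow]

variable {ι : Type*}

def blockSum (u : ι → ℝ) (A : Finset ι) (x : ι → ℝ) : ℝ := ∑ j ∈ A, u j * x j

theorem continuous_blockSum (u : ι → ℝ) (A : Finset ι) : Continuous (blockSum u A) := by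
  unfold blockSum; fun_prop

variable [Fintype ι]

variable (ι) in
noncomputable def cubeMeasure : Measure (ι → ℝ) := Measure.pi fun _ => centeredUniform

instance : IsProbabilityMeasure (cubeMeasure ι) := by
  unfold cubeMeasure; infer_instance

theorem cubeMeasure_eq_restrict :
    cubeMeasure ι = volume.restrict (univ.pi fun _ => Icc (-1/2) (1/2)) := by
  rw [volume_pi, Measure.restrict_pi_pi]; rfl

theorem integrable_cubeMeasure_of_continuous {f : (ι → ℝ) → ℝ} (hf : Continuous f) :
    Integrable f (cubeMeasure ι) := by
  rw [cubeMeasure_eq_restrict]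
  exact hf.continuousOn.integrableOn_compact (isCompact_univ_pi fun _ => isCompact_Icc)

theorem measurePreserving_neg_centeredUniform :
    MeasurePreserving (fun t : ℝ => -t) centeredUniform centeredUniform := by
  have hIcc : (fun t : ℝ => -t) ⁻¹' Icc (-1/2) (1/2) = Icc (-1/2) (1/2) := by
    ext t; simp only [mem_preimage, mem_Icc]; constructor <;> intro h <;> constructor <;> linarith
  refine ⟨measurable_neg, ?_⟩
  rw [centeredUniform, ← hIcc, ← Measure.restrict_map measurable_neg measurableSet_Icc,
    (Measure.measurePreserving_neg volume).map_eq, hIcc]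

theorem measurePreserving_neg_cubeMeasure :
    MeasurePreserving (fun x : ι → ℝ => -x) (cubeMeasure ι) (cubeMeasure ι) :=
  measurePreserving_pi _ _ fun _ => measurePreserving_neg_centeredUniform

theorem integral_eval_pow_cubeMeasure (i : ι) (k : ℕ) :
    ∫ x, x i ^ k ∂cubeMeasure ι = ((1/2 : ℝ) ^ (k + 1) - (-1/2) ^ (k + 1)) / (k + 1) := by
  rw [← integral_pow_centeredUniform,
    ← (measurePreserving_eval (fun _ => centeredUniform) i).map_eq,
    integral_map (measurable_pi_apply i).aemeasurable (by fun_prop)]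
  rfl

variable (u : ι → ℝ)

theorem indepFun_blockSum {A B : Finset ι} (hAB : Disjoint A B) :
    IndepFun (blockSum u A) (blockSum u B) (cubeMeasure ι) := by
  have hind : iIndepFun (fun i (x : ι → ℝ) => u i * x i) (cubeMeasure ι) :=
    iIndepFun_pi (X := fun i t => u i * t) fun _ => by fun_prop
  have := (hind.indepFun_finset A B hAB fun _ => by fun_prop).comp
    (φ := fun y : A → ℝ => ∑ i, y i) (ψ := fun y : B → ℝ => ∑ i, y i) (by fun_prop) (by fun_prop)
  convert this using 1 <;> ext x <;> simp [blockSum, ← Finset.sum_attach _ (fun j => u j * x j)]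

theorem integral_blockSum_insert_pow [DecidableEq ι] {A : Finset ι} {k : ι} (hk : k ∉ A) (p : ℕ) :
    ∫ x, blockSum u (insert k A) x ^ p ∂cubeMeasure ι =
      ∑ i ∈ Finset.range (p + 1), (∫ x, blockSum u A x ^ i ∂cubeMeasure ι) * u k ^ (p - i) *
        (∫ x, x k ^ (p - i) ∂cubeMeasure ι) * p.choose i := by
  have hsplit : ∀ x, blockSum u (insert k A) x = blockSum u A x + u k * x k := fun x => by
    rw [blockSum, Finset.sum_insert hk, add_comm]; rfl
  have hind : IndepFun (blockSum u A) (fun x => u k * x k) (cubeMeasure ι) := by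
    convert indepFun_blockSum u (Finset.disjoint_singleton_right.2 hk) using 1
    ext x; simp [blockSum]
  have hcont := continuous_blockSum u A
  simp_rw [hsplit, add_pow]
  rw [integral_finsetSum _ fun i _ => integrable_cubeMeasure_of_continuous (by fun_prop)]
  refine Finset.sum_congr rfl fun i _ => ?_
  have hfactor : ∫ x, blockSum u A x ^ i * (u k * x k) ^ (p - i) ∂cubeMeasure ι =
      (∫ x, blockSum u A x ^ i ∂cubeMeasure ι) * ∫ x, (u k * x k) ^ (p - i) ∂cubeMeasure ι :=
    (hind.comp (measurable_id.pow_const i) (measurable_id.pow_const (p - i))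
      ).integral_fun_mul_eq_mul_integral (hcont.pow i).aestronglyMeasurable
      ((continuous_const.mul (continuous_apply k)).pow _).aestronglyMeasurable
  simp_rw [integral_mul_const, hfactor, mul_pow, integral_const_mul]
  ring

theorem integral_blockSum_sq (A : Finset ι) :
    ∫ x, blockSum u A x ^ 2 ∂cubeMeasure ι = (∑ j ∈ A, u j ^ 2) / 12 := by
  classical
  induction A using Finset.induction_on with
  | empty => simp [blockSum]
  | insert k A hk ih =>
    simp only [integral_blockSum_insert_pow u hk, Finset.sum_range_succ,
      integral_eval_pow_cubeMeasure, ih, Finset.sum_insert hk]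
    norm_num
    ring

theorem integral_blockSum_pow_four_le (A : Finset ι) :
    ∫ x, blockSum u A x ^ 4 ∂cubeMeasure ι ≤ (∑ j ∈ A, u j ^ 2) ^ 2 / 48 := by
  classical
  induction A using Finset.induction_on with
  | empty => simp [blockSum]
  | insert k A hk ih =>
    simp only [integral_blockSum_insert_pow u hk, Finset.sum_range_succ,
      integral_eval_pow_cubeMeasure, integral_blockSum_sq, Finset.sum_insert hk]
    norm_num [Nat.choose]
    have hv : 0 ≤ ∑ j ∈ A, u j ^ 2 := Finset.sum_nonneg fun j _ => sq_nonneg (u j)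
    nlinarith [sq_nonneg (u k), pow_nonneg (sq_nonneg (u k)) 2]

theorem measureReal_blockSum_le_neg (A : Finset ι) (t : ℝ) :
    (cubeMeasure ι).real {x | blockSum u A x ≤ -t} =
      (cubeMeasure ι).real {x | t ≤ blockSum u A x} := by
  have hneg : {x | blockSum u A x ≤ -t} = (fun x => -x) ⁻¹' {x | t ≤ blockSum u A x} := by
    ext x; simp [blockSum, le_neg]
  rw [hneg, measurePreserving_neg_cubeMeasure.measureReal_preimage
    (measurableSet_le measurable_const (continuous_blockSum u A).measurable).nullMeasurableSet]

theorem half_le_measureReal_blockSum_nonneg (A : Finset ι) :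
    1 / 2 ≤ (cubeMeasure ι).real {x | 0 ≤ blockSum u A x} := by
  have hcover : (cubeMeasure ι).real univ ≤ (cubeMeasure ι).real {x | 0 ≤ blockSum u A x} +
      (cubeMeasure ι).real {x | blockSum u A x ≤ -0} :=
    (measureReal_mono fun x _ => by simpa using le_total 0 (blockSum u A x)).trans
      (measureReal_union_le _ _)
  rw [measureReal_blockSum_le_neg, probReal_univ] at hcover
  linarith

theorem one_div_24_le_measureReal_le_blockSum {A : Finset ι} {s : ℝ}
    (hs : 24 * s ^ 2 ≤ ∑ j ∈ A, u j ^ 2) :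
    1 / 24 ≤ (cubeMeasure ι).real {x | s ≤ blockSum u A x} := by
  rcases le_or_gt s 0 with hs0 | hs0
  · exact le_trans (by norm_num) ((half_le_measureReal_blockSum_nonneg u A).trans
      (measureReal_mono fun x hx => hs0.trans hx))
  have hv : 0 < ∑ j ∈ A, u j ^ 2 := lt_of_lt_of_le (by positivity) hs
  have hcont := continuous_blockSum u A
  have hPZ := paley_zygmund (μ := cubeMeasure ι) hcont.measurable
    (integrable_cubeMeasure_of_continuous (by fun_prop))
    (integrable_cubeMeasure_of_continuous (by fun_prop)) (θ := 1 / 2) (K := 3) (by norm_num)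
    (by norm_num) (by rw [integral_blockSum_sq]; positivity)
    (by rw [integral_blockSum_sq]; linarith [integral_blockSum_pow_four_le u A])
  rw [integral_blockSum_sq] at hPZ
  have hsub : {x | 1 / 2 * ((∑ j ∈ A, u j ^ 2) / 12) ≤ blockSum u A x ^ 2} ⊆
      {x | s ≤ blockSum u A x} ∪ {x | blockSum u A x ≤ -s} := by
    intro x (hx : (1 / 2 : ℝ) * _ ≤ _)
    have : |s| ≤ |blockSum u A x| := sq_le_sq.1 (by linarith)
    rw [abs_of_pos hs0] at this
    rcases le_abs'.1 this with h | h
    · exact Or.inr h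
    · exact Or.inl h
  have := (measureReal_mono (μ := cubeMeasure ι) hsub).trans (measureReal_union_le _ _)
  rw [measureReal_blockSum_le_neg] at this
  linarith

theorem measureReal_mul_le_measureReal_le_blockSum_union [DecidableEq ι] {A B : Finset ι}
    (hAB : Disjoint A B) (a b : ℝ) :
    (cubeMeasure ι).real {x | a ≤ blockSum u A x} * (cubeMeasure ι).real {x | b ≤ blockSum u B x}
      ≤ (cubeMeasure ι).real {x | a + b ≤ blockSum u (A ∪ B) x} := by
  have hprod : cubeMeasure ι ({x | a ≤ blockSum u A x} ∩ {x | b ≤ blockSum u B x}) =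
      cubeMeasure ι {x | a ≤ blockSum u A x} * cubeMeasure ι {x | b ≤ blockSum u B x} :=
    (indepFun_blockSum u hAB).measure_inter_preimage_eq_mul _ _ measurableSet_Ici measurableSet_Ici
  rw [measureReal_def, measureReal_def, ← ENNReal.toReal_mul, ← hprod, ← measureReal_def]
  refine measureReal_mono fun x ⟨(ha : a ≤ _), (hb : b ≤ _)⟩ => ?_
  change a + b ≤ ∑ j ∈ A ∪ B, u j * x j
  rw [Finset.sum_union hAB]
  exact add_le_add ha hb

theorem pow_div_two_le_measureReal_le_blockSum {δ s : ℝ} (hs : 24 * s ^ 2 ≤ δ ^ 2) (k : ℕ)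
    {S : Finset ι} (hS : 2 * k * δ ^ 2 ≤ ∑ j ∈ S.filter (fun j => |u j| < δ), u j ^ 2) :
    (1 / 24) ^ k / 2 ≤ (cubeMeasure ι).real {x | k * s ≤ blockSum u S x} := by
  classical
  induction k generalizing S with
  | zero => simpa using half_le_measureReal_blockSum_nonneg u S
  | succ k ih =>
    obtain ⟨A, hA, hA_low, hA_up⟩ := Finset.exists_subset_sum_mem_Icc (sq_nonneg δ)
      (fun j hj => sq_le_sq.2 ((Finset.mem_filter.1 hj).2.le.trans (le_abs_self δ)))
      (le_trans (by push_cast; nlinarith [sq_nonneg δ]) hS)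
    have hAS : A ⊆ S := hA.trans (Finset.filter_subset _ _)
    have hrest : 2 * k * δ ^ 2 ≤ ∑ j ∈ (S \ A).filter (fun j => |u j| < δ), u j ^ 2 := by
      have : (S \ A).filter (fun j => |u j| < δ) = S.filter (fun j => |u j| < δ) \ A := by
        ext j; simp [and_right_comm]
      rw [this, Finset.sum_sdiff_eq_sub hA]
      push_cast at hS
      linarith
    have hsplit := measureReal_mul_le_measureReal_le_blockSum_union u
      (Finset.disjoint_sdiff (s := A) (t := S)) s (k * s)
    rw [Finset.union_sdiff_of_subset hAS] at hsplit
    calc (1 / 24 : ℝ) ^ (k + 1) / 2 = 1 / 24 * ((1 / 24) ^ k / 2) := by ring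
      _ ≤ (cubeMeasure ι).real {x | s ≤ blockSum u A x} *
          (cubeMeasure ι).real {x | k * s ≤ blockSum u (S \ A) x} :=
        mul_le_mul (one_div_24_le_measureReal_le_blockSum u (by linarith)) (ih hrest)
          (by positivity) measureReal_nonneg
      _ ≤ (cubeMeasure ι).real {x | ((k + 1 : ℕ) : ℝ) * s ≤ blockSum u S x} := by
        convert hsplit using 5
        push_cast; ring

end Cube

theorem volume_unitCube_le_inner_eq_cubeMeasure (n : ℕ) (u : EuclideanSpace ℝ (Fin n)) (t : ℝ) :
    volume {x ∈ unitCube n | t ≤ ⟪x, u⟫} =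
      cubeMeasure (Fin n) {y | t ≤ blockSum u.ofLp Finset.univ y} := by
  have hmeas : MeasurableSet {y | t ≤ blockSum u.ofLp Finset.univ y} :=
    measurableSet_le measurable_const (continuous_blockSum _ _).measurable
  rw [cubeMeasure_eq_restrict, Measure.restrict_apply hmeas,
    ← (PiLp.volume_preserving_ofLp (Fin n)).measure_preimage
      (hmeas.inter (MeasurableSet.univ_pi fun _ => measurableSet_Icc)).nullMeasurableSet]
  congr 1
  ext x
  simp [unitCube, blockSum, PiLp.inner_apply, abs_le, and_comm, neg_div, -Set.pi_univ_Icc]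

theorem incompressible_halfspace_bound (ε : ℝ) (hε : 0 < ε) :
    ∃ δ η : ℝ, 0 < δ ∧ 0 < η ∧ ∀ n : ℕ, ∀ u : EuclideanSpace ℝ (Fin n), ‖u‖ = 1 →
      ε ^ 2 < ∑ j ∈ Finset.univ.filter fun j => |u j| < δ, u j ^ 2 →
      ENNReal.ofReal η ≤ volume {x ∈ unitCube n | 1 ≤ ⟪x, u⟫} := by
  set m : ℕ := ⌈50 / ε ^ 2⌉₊
  have hm : 50 / ε ^ 2 ≤ m := Nat.le_ceil _
  have hm0 : (0 : ℝ) < m := lt_of_lt_of_le (by positivity) hm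
  refine ⟨5 / m, (1 / 24) ^ m / 2, by positivity, by positivity, fun n u _ hu => ?_⟩
  have hmass : 2 * m * (5 / m) ^ 2 ≤ ε ^ 2 := by
    rw [div_le_iff₀ (by positivity)] at hm
    rw [div_pow, ← mul_div_assoc, div_le_iff₀ (by positivity)]
    nlinarith
  have hs : 24 * (1 / m : ℝ) ^ 2 ≤ (5 / m) ^ 2 := by
    rw [div_pow, div_pow, mul_div_assoc']
    gcongr
    norm_num
  have key := pow_div_two_le_measureReal_le_blockSum u.ofLp hs m (hmass.trans hu.le)
  rw [mul_one_div_cancel hm0.ne'] at key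
  rw [volume_unitCube_le_inner_eq_cubeMeasure]
  exact ENNReal.ofReal_le_of_le_toReal key
end

section
/- Let Y be an integrable real-valued random variable with E Y = 0, and let λ > 0 be such that exp(λY) and exp(−λY) are integrable. Then E exp(λ Y_+) ≤ E exp(λ Y) + (1/4)·E exp(−λ Y), where Y_+ = max(Y, 0). -/
open MeasureTheory

theorem exp_pos_part_bound
    {Ω : Type*} [MeasurableSpace Ω] (P : Measure Ω) [IsProbabilityMeasure P]
    (Y : Ω → ℝ) (hYint : Integrable Y P) (hY : (∫ ω, Y ω ∂P) = 0)
    (lam : ℝ) (hlam : 0 < lam)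
    (hint₁ : Integrable (fun ω => Real.exp (lam * Y ω)) P)
    (hint₂ : Integrable (fun ω => Real.exp (-lam * Y ω)) P) :
    (∫ ω, Real.exp (lam * max (Y ω) 0) ∂P) ≤
      (∫ ω, Real.exp (lam * Y ω) ∂P) + (1 / 4) * ∫ ω, Real.exp (-lam * Y ω) ∂P := by
  have hpt : ∀ ω, Real.exp (lam * max (Y ω) 0) ≤
      Real.exp (lam * Y ω) + (1/4) * Real.exp (-lam * Y ω) := by
    intro ω
    rcases le_or_gt 0 (Y ω) with h | h
    · rw [max_eq_left h]
      have := (Real.exp_pos (-lam * Y ω)).le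
      linarith
    · rw [max_eq_right h.le, mul_zero, Real.exp_zero]
      have hab : Real.exp (lam * Y ω) * Real.exp (-lam * Y ω) = 1 := by
        rw [← Real.exp_add]; ring_nf; exact Real.exp_zero
      nlinarith [Real.exp_pos (lam * Y ω), Real.exp_pos (-lam * Y ω),
        sq_nonneg (2 * Real.exp (lam * Y ω) - 1)]
  have hmeas : AEStronglyMeasurable (fun ω => Real.exp (lam * max (Y ω) 0)) P := by
    exact (Real.continuous_exp.comp_aestronglyMeasurable
      ((hYint.aestronglyMeasurable.sup aestronglyMeasurable_const).const_mul lam))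
  have hintL : Integrable (fun ω => Real.exp (lam * max (Y ω) 0)) P := by
    refine Integrable.mono' (hint₁.add (hint₂.const_mul (1/4))) hmeas ?_
    filter_upwards with ω
    simp only [Pi.add_apply, Real.norm_eq_abs, Real.abs_exp]
    exact hpt ω
  calc (∫ ω, Real.exp (lam * max (Y ω) 0) ∂P)
      ≤ ∫ ω, (Real.exp (lam * Y ω) + (1/4) * Real.exp (-lam * Y ω)) ∂P :=
        integral_mono hintL (hint₁.add (hint₂.const_mul (1/4))) hpt
    _ = _ := by rw [integral_add hint₁ (hint₂.const_mul (1/4)), integral_const_mul]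
end
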